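/- arXiv:1610.03425 — 5 statements merged into one kernel-verified Lean document; each statement's English description precedes it below -/
import Mathlib

section
/- Let f satisfy Assumption A and let ρ > 0. Then there exist constants 0 < c_f ≤ C_f < ∞, depending only on f and ρ, such that: (i) for every n ∈ ℕ and every p ∈ Δ_{n,ρ}, one has (Σ_{i=1}^n (n p_i − 1)²)^{1/2} ≤ √(ρ C_f); and (ii) the supremum over all n ∈ ℕ and all p ∈ Δ_{n,ρ} of (Σ_{i=1}^n (n p_i − 1)²)^{1/2} is at least √(ρ c_f). -/
/-!
Since `f'' 1 = 2`, near `1` the function `f` lies between `(t - 1)² / 2` and `3 (t - 1)² / 2`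
(subtracting either quadratic leaves a convex function with a critical point at `1`). Convexity
and `f 1 = 0` then give `f t ≥ (δ / 2) min ((t - 1)², |t - 1|)` for all `t`, so a total divergence
at most `ρ` bounds every `|n pᵢ - 1|` and hence `∑ (n pᵢ - 1)²` by a multiple of `ρ`. Conversely,
the two-point distribution `((1 + s) / 2, (1 - s) / 2)` with `s` small lies in `Δ_{2,ρ}` and has
`∑ (2 pᵢ - 1)² = 2 s² > 0`.
-/

open Filter Set Topology

noncomputable section

/-- Assumption A: `f : ℝ → ℝ ∪ {+∞}` is lower semicontinuous, convex, equal to `+∞` on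
negative reals, three times continuously differentiable on a neighborhood of `1`, with
`f 1 = f' 1 = 0` and `f'' 1 = 2`. -/
structure IsDivergenceFn (f : ℝ → EReal) : Prop where
  lsc : LowerSemicontinuous f
  convex : ∀ x y a b : ℝ, 0 ≤ a → 0 ≤ b → a + b = 1 →
    f (a * x + b * y) ≤ (a : EReal) * f x + (b : EReal) * f y
  eq_top_of_neg : ∀ t : ℝ, t < 0 → f t = ⊤
  smooth : ∃ g : ℝ → ℝ, ∃ ε : ℝ, 0 < ε ∧
    (∀ t ∈ Set.Ioo (1 - ε) (1 + ε), f t = (g t : EReal)) ∧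
    ContDiffOn ℝ 3 g (Set.Ioo (1 - ε) (1 + ε)) ∧
    g 1 = 0 ∧ deriv g 1 = 0 ∧ deriv (deriv g) 1 = 2

/-- The empirical `f`-divergence ball `Δ_{n,ρ}`. -/
def simplexBall (f : ℝ → EReal) (n : ℕ) (ρ : ℝ) : Set (Fin n → ℝ) :=
  {p | (∀ i, 0 ≤ p i) ∧ ∑ i, p i = 1 ∧ ∑ i, f ((n : ℝ) * p i) ≤ (ρ : EReal)}

lemma ConvexOn.le_of_hasDerivAt_eq_zero {u : ℝ → ℝ} {S : Set ℝ} {a t : ℝ} (hu : ConvexOn ℝ S u)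
    (ha : a ∈ interior S) (hu' : HasDerivAt u 0 a) (ht : t ∈ S) : u a ≤ u t :=
  hu.isMinOn_of_rightDeriv_eq_zero ha
    (hu'.hasDerivWithinAt.derivWithin (uniqueDiffWithinAt_Ioi a)) ht

lemma eventually_quadratic_le_of_le_deriv2 {g g' g'' : ℝ → ℝ} {a m : ℝ}
    (hg : ∀ᶠ t in 𝓝 a, HasDerivAt g (g' t) t) (hg' : ∀ᶠ t in 𝓝 a, HasDerivAt g' (g'' t) t)
    (hm : ∀ᶠ t in 𝓝 a, m ≤ g'' t) :
    ∀ᶠ t in 𝓝 a, g a + g' a * (t - a) + m / 2 * (t - a) ^ 2 ≤ g t := by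
  obtain ⟨ε, hε, hball⟩ := Metric.eventually_nhds_iff_ball.mp (hg.and (hg'.and hm))
  set u : ℝ → ℝ := fun t ↦ g t - (g a + g' a * (t - a) + m / 2 * (t - a) ^ 2) with hu
  have hu' : ∀ t ∈ Metric.ball a ε, HasDerivAt u (g' t - (g' a + m * (t - a))) t := fun t ht ↦
    ((hball t ht).1.sub ((((hasDerivAt_id' t).sub_const a).const_mul (g' a)).const_add (g a)
      |>.add ((((hasDerivAt_id' t).sub_const a).pow 2).const_mul (m / 2)))).congr_deriv
      (by ring)
  have hu'' : ∀ t ∈ Metric.ball a ε, HasDerivAt (fun s ↦ g' s - (g' a + m * (s - a)))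
      (g'' t - m) t := fun t ht ↦
    ((hball t ht).2.1.sub ((((hasDerivAt_id' t).sub_const a).const_mul m).const_add (g' a))
      ).congr_deriv (by ring)
  have hconv : ConvexOn ℝ (Metric.ball a ε) u := by
    have h := convexOn_of_hasDerivWithinAt2_nonneg (convex_ball a ε) (f := u)
      (f' := fun s ↦ g' s - (g' a + m * (s - a))) (f'' := fun s ↦ g'' s - m)
    rw [Metric.isOpen_ball.interior_eq] at h
    exact h (fun t ht ↦ (hu' t ht).continuousAt.continuousWithinAt)
      (fun t ht ↦ (hu' t ht).hasDerivWithinAt) (fun t ht ↦ (hu'' t ht).hasDerivWithinAt)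
      (fun t ht ↦ sub_nonneg.mpr (hball t ht).2.2)
  have ha : a ∈ Metric.ball a ε := Metric.mem_ball_self hε
  filter_upwards [Metric.ball_mem_nhds a hε] with t ht
  have := hconv.le_of_hasDerivAt_eq_zero (by rwa [Metric.isOpen_ball.interior_eq])
    ((hu' a ha).congr_deriv (by ring)) ht
  simp only [hu, sub_self, mul_zero, add_zero, ne_eq, OfNat.ofNat_ne_zero, not_false_eq_true,
    zero_pow] at this
  linarith

theorem sq_le_max_one_mul_min_sq_abs {x K : ℝ} (hx : min (x ^ 2) |x| ≤ K) :
    x ^ 2 ≤ max 1 K * min (x ^ 2) |x| := by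
  rcases le_total |x| 1 with h | h
  · have hmin : min (x ^ 2) |x| = x ^ 2 := min_eq_left (by nlinarith [sq_abs x, abs_nonneg x])
    rw [hmin]
    exact le_mul_of_one_le_left (sq_nonneg x) (le_max_left 1 K)
  · have hmin : min (x ^ 2) |x| = |x| := min_eq_right (by nlinarith [sq_abs x])
    rw [hmin] at hx ⊢
    rw [← sq_abs, sq]
    exact mul_le_mul_of_nonneg_right (hx.trans (le_max_right 1 K)) (abs_nonneg x)

theorem EReal.coe_finset_sum {ι : Type*} (s : Finset ι) (x : ι → ℝ) :
    ((∑ i ∈ s, x i : ℝ) : EReal) = ∑ i ∈ s, (x i : EReal) :=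
  map_sum (⟨⟨(↑), EReal.coe_zero⟩, EReal.coe_add⟩ : ℝ →+ EReal) x s

namespace IsDivergenceFn

variable {f : ℝ → EReal}

theorem exists_quadratic_bounds (hf : IsDivergenceFn f) :
    ∃ δ : ℝ, 0 < δ ∧ δ ≤ 1 ∧ ∀ t : ℝ, |t - 1| ≤ δ →
      (((t - 1) ^ 2 / 2 : ℝ) : EReal) ≤ f t ∧ f t ≤ ((3 * (t - 1) ^ 2 / 2 : ℝ) : EReal) := by
  obtain ⟨g, ε, hε, hfg, hg, hg1, hg'1, hg''1⟩ := hf.smooth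
  have hU : ∀ᶠ t in 𝓝 (1 : ℝ), t ∈ Ioo (1 - ε) (1 + ε) := Ioo_mem_nhds (by linarith) (by linarith)
  have hg' : ContDiffOn ℝ 2 (deriv g) (Ioo (1 - ε) (1 + ε)) :=
    hg.deriv_of_isOpen isOpen_Ioo (by norm_num)
  have hd1 : ∀ᶠ t in 𝓝 1, HasDerivAt g (deriv g t) t := by
    filter_upwards [hU] with t ht
    exact ((hg.differentiableOn (by norm_num) t ht).differentiableAt
      (isOpen_Ioo.mem_nhds ht)).hasDerivAt
  have hd2 : ∀ᶠ t in 𝓝 1, HasDerivAt (deriv g) (deriv (deriv g) t) t := by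
    filter_upwards [hU] with t ht
    exact ((hg'.differentiableOn (by norm_num) t ht).differentiableAt
      (isOpen_Ioo.mem_nhds ht)).hasDerivAt
  have hcont : ContinuousAt (deriv (deriv g)) 1 :=
    (hg'.continuousOn_deriv_of_isOpen isOpen_Ioo (by norm_num)).continuousAt hU
  have hlo : ∀ᶠ t in 𝓝 1, 1 ≤ deriv (deriv g) t :=
    hcont.eventually (eventually_ge_nhds (by rw [hg''1]; norm_num))
  have hhi : ∀ᶠ t in 𝓝 1, -3 ≤ -deriv (deriv g) t :=
    hcont.eventually (eventually_le_nhds (by rw [hg''1]; norm_num)) |>.mono fun _ h ↦ neg_le_neg h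
  have hlower := eventually_quadratic_le_of_le_deriv2 hd1 hd2 hlo
  have hupper := eventually_quadratic_le_of_le_deriv2 (hd1.mono fun _ h ↦ h.neg)
    (hd2.mono fun _ h ↦ h.neg) hhi
  obtain ⟨r, hr, hball⟩ := Metric.eventually_nhds_iff.mp
    ((hU.and hlower).and hupper)
  refine ⟨min (r / 2) 1, by positivity, min_le_right _ _, fun t ht ↦ ?_⟩
  obtain ⟨⟨htU, hge⟩, hle⟩ := hball (show dist t 1 < r by
    rw [Real.dist_eq]; linarith [min_le_left (r / 2) 1])
  simp only [Pi.neg_apply, hg1, hg'1] at hge hle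
  rw [hfg t htU, EReal.coe_le_coe_iff, EReal.coe_le_coe_iff]
  constructor <;> linarith

theorem map_one (hf : IsDivergenceFn f) : f 1 = 0 := by
  obtain ⟨δ, hδ, -, hq⟩ := hf.exists_quadratic_bounds
  have h := hq 1 (by simpa using hδ.le)
  exact le_antisymm (by simpa using h.2) (by simpa using h.1)

theorem apply_one_add_mul_le (hf : IsDivergenceFn f) {a : ℝ} (ha₀ : 0 ≤ a) (ha₁ : a ≤ 1)
    (x : ℝ) : f (1 + a * (x - 1)) ≤ a * f x := by
  have h := hf.convex x 1 a (1 - a) ha₀ (by linarith) (by ring)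
  rw [hf.map_one, mul_zero, add_zero] at h
  convert h using 2
  ring

theorem exists_min_sq_abs_le (hf : IsDivergenceFn f) :
    ∃ δ : ℝ, 0 < δ ∧ ∀ t : ℝ, ((δ / 2 * min ((t - 1) ^ 2) |t - 1| : ℝ) : EReal) ≤ f t := by
  obtain ⟨δ, hδ, hδ₁, hq⟩ := hf.exists_quadratic_bounds
  refine ⟨δ, hδ, fun t ↦ ?_⟩
  by_cases ht : |t - 1| ≤ δ
  · refine le_trans (EReal.coe_le_coe_iff.mpr ?_) (hq t ht).1
    have := min_le_left ((t - 1) ^ 2) |t - 1|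
    nlinarith [sq_nonneg (t - 1)]
  -- Far from `1`, convexity through `f 1 = 0` gives linear growth: with `a = δ / |t - 1|`,
  -- the point `1 + a (t - 1)` is at distance `δ` from `1` and `f` there is at most `a * f t`.
  push Not at ht
  have hpos : 0 < |t - 1| := hδ.trans ht
  set a := δ / |t - 1| with ha
  have ha₀ : 0 < a := div_pos hδ hpos
  have hdist : |1 + a * (t - 1) - 1| = δ := by
    rw [add_sub_cancel_left, abs_mul, abs_of_pos ha₀, ha, div_mul_cancel₀ _ hpos.ne']
  have hseg : (((δ ^ 2 / 2) : ℝ) : EReal) ≤ a * f t := by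
    have h := (hq _ hdist.le).1
    rw [← sq_abs, hdist] at h
    exact h.trans (hf.apply_one_add_mul_le ha₀.le ((div_le_one hpos).mpr ht.le) t)
  have hdiv : (((δ ^ 2 / 2) / a : ℝ) : EReal) ≤ f t := by
    rw [EReal.coe_div]
    exact (EReal.div_le_iff_le_mul (EReal.coe_pos.mpr ha₀) (EReal.coe_ne_top a)).mpr hseg
  refine le_trans (EReal.coe_le_coe_iff.mpr ?_) hdiv
  rw [ha, div_div_eq_mul_div]
  have := min_le_right ((t - 1) ^ 2) |t - 1|
  rw [le_div_iff₀ hδ]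
  nlinarith

theorem exists_sum_sq_sub_one_le (hf : IsDivergenceFn f) (ρ : ℝ) :
    ∃ C : ℝ, 0 < C ∧ ∀ {ι : Type*} [Fintype ι] (x : ι → ℝ),
      ∑ i, f (x i) ≤ ρ → ∑ i, (x i - 1) ^ 2 ≤ ρ * C := by
  obtain ⟨δ, hδ, hmin⟩ := hf.exists_min_sq_abs_le
  set h : ℝ → ℝ := fun t ↦ δ / 2 * min ((t - 1) ^ 2) |t - 1| with h_def
  have h_nonneg : ∀ t, 0 ≤ h t := fun t ↦
    mul_nonneg (by positivity) (le_min (sq_nonneg _) (abs_nonneg _))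
  set K := max 1 (2 * ρ / δ)
  refine ⟨2 / δ * K, by positivity, fun x hx ↦ ?_⟩
  have hsum : ∑ i, h (x i) ≤ ρ := by
    rw [← EReal.coe_le_coe_iff, EReal.coe_finset_sum]
    exact (Finset.sum_le_sum fun i _ ↦ hmin (x i)).trans hx
  have hterm : ∀ i, (x i - 1) ^ 2 ≤ 2 / δ * K * h (x i) := by
    intro i
    have hle : h (x i) ≤ ρ :=
      (Finset.single_le_sum (fun j _ ↦ h_nonneg (x j)) (Finset.mem_univ i)).trans hsum
    have hK : min ((x i - 1) ^ 2) |x i - 1| ≤ 2 * ρ / δ := by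
      rw [le_div_iff₀ hδ]
      simp only [h_def] at hle
      linarith
    calc (x i - 1) ^ 2 ≤ K * min ((x i - 1) ^ 2) |x i - 1| := sq_le_max_one_mul_min_sq_abs hK
      _ = 2 / δ * K * h (x i) := by simp only [h_def]; field_simp
  calc ∑ i, (x i - 1) ^ 2 ≤ ∑ i, 2 / δ * K * h (x i) := Finset.sum_le_sum fun i _ ↦ hterm i
    _ = 2 / δ * K * ∑ i, h (x i) := by rw [Finset.mul_sum]
    _ ≤ 2 / δ * K * ρ := by gcongr
    _ = ρ * (2 / δ * K) := mul_comm _ _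

theorem exists_mem_simplexBall_two (hf : IsDivergenceFn f) {ρ : ℝ} (hρ : 0 < ρ) :
    ∃ p ∈ simplexBall f 2 ρ, 0 < ∑ i, (((2 : ℕ) : ℝ) * p i - 1) ^ 2 := by
  obtain ⟨δ, hδ, hδ₁, hq⟩ := hf.exists_quadratic_bounds
  set s := min δ (ρ / 3)
  have hs : 0 < s := lt_min hδ (by positivity)
  have hsδ : s ≤ δ := min_le_left _ _
  have hsρ : 3 * s ^ 2 ≤ ρ := by nlinarith [min_le_right δ (ρ / 3)]
  have hp₀ : ((2 : ℕ) : ℝ) * ((1 + s) / 2) = 1 + s := by push_cast; ring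
  have hp₁ : ((2 : ℕ) : ℝ) * ((1 - s) / 2) = 1 - s := by push_cast; ring
  refine ⟨![(1 + s) / 2, (1 - s) / 2], ⟨fun i ↦ ?_, ?_, ?_⟩, ?_⟩
  · fin_cases i <;>
      simp only [Fin.zero_eta, Fin.mk_one, Matrix.cons_val_zero, Matrix.cons_val_one,
        Matrix.cons_val_fin_one] <;> linarith
  · simp only [Fin.sum_univ_two, Matrix.cons_val_zero, Matrix.cons_val_one]
    ring
  · have h₀ := (hq (1 + s) (by rw [add_sub_cancel_left, abs_of_pos hs]; exact hsδ)).2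
    have h₁ := (hq (1 - s) (by rw [sub_sub_cancel_left, abs_neg, abs_of_pos hs]; exact hsδ)).2
    simp only [Fin.sum_univ_two, Matrix.cons_val_zero, Matrix.cons_val_one, hp₀, hp₁]
    refine (add_le_add h₀ h₁).trans ?_
    rw [← EReal.coe_add, EReal.coe_le_coe_iff]
    nlinarith
  · simp only [Fin.sum_univ_two, Matrix.cons_val_zero, Matrix.cons_val_one, hp₀, hp₁]
    nlinarith

end IsDivergenceFn

theorem stmt0 (f : ℝ → EReal) (hf : IsDivergenceFn f) (ρ : ℝ) (hρ : 0 < ρ) :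
    ∃ c C : ℝ, 0 < c ∧ c ≤ C ∧
      (∀ (n : ℕ) (p : Fin n → ℝ), p ∈ simplexBall f n ρ →
        Real.sqrt (∑ i, ((n : ℝ) * p i - 1) ^ 2) ≤ Real.sqrt (ρ * C)) ∧
      Real.sqrt (ρ * c) ≤
        sSup {r : ℝ | ∃ (n : ℕ) (p : Fin n → ℝ), p ∈ simplexBall f n ρ ∧
          r = Real.sqrt (∑ i, ((n : ℝ) * p i - 1) ^ 2)} := by
  obtain ⟨C, hC, hsum⟩ := hf.exists_sum_sq_sub_one_le ρ
  have hupper : ∀ (n : ℕ) (p : Fin n → ℝ), p ∈ simplexBall f n ρ →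
      Real.sqrt (∑ i, ((n : ℝ) * p i - 1) ^ 2) ≤ Real.sqrt (ρ * C) :=
    fun n p hp ↦ Real.sqrt_le_sqrt (hsum _ hp.2.2)
  obtain ⟨p, hp, hpos⟩ := hf.exists_mem_simplexBall_two hρ
  set σ := ∑ i, (((2 : ℕ) : ℝ) * p i - 1) ^ 2
  refine ⟨min C (σ / ρ), C, lt_min hC (div_pos hpos hρ), min_le_left _ _, hupper, ?_⟩
  refine (Real.sqrt_le_sqrt ?_).trans (le_csSup ⟨√(ρ * C), ?_⟩ ⟨2, p, hp, rfl⟩)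
  · calc ρ * min C (σ / ρ) ≤ ρ * (σ / ρ) := by gcongr; exact min_le_right _ _
      _ = σ := mul_div_cancel₀ σ hρ.ne'
  · rintro r ⟨n, q, hq, rfl⟩
    exact hupper n q hq
end
end

section
/- Let n ∈ ℕ, z ∈ ℝⁿ, ρ > 0, a ≥ 1, and ε > 0. Define U := { u ∈ ℝⁿ : Σ_{i=1}^n u_i = 0, max_i |n u_i| ≤ ε, a · Σ_{i=1}^n (n u_i)² ≤ ρ }. If max_{i ≤ n} |z_i − z̄| / √n ≤ ε · s_n(z) · √(a/ρ), then sup_{u ∈ U} uᵀz = √(ρ s_n(z)² / n) / √a. -/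
open MeasureTheory ProbabilityTheory Filter Set

noncomputable section

/-- Sample mean `z̄ = (1/n) ∑ z_i`. -/
def sampleMean {n : ℕ} (z : Fin n → ℝ) : ℝ := (∑ i, z i) / n

/-- Sample variance `s_n(z)² = (1/n) ∑ (z_i − z̄)²`. -/
def sampleVar {n : ℕ} (z : Fin n → ℝ) : ℝ := (∑ i, (z i - sampleMean z) ^ 2) / n

/-- The Huber function `h_ε`. -/
def huber (ε t : ℝ) : ℝ := if |t| ≤ ε then t ^ 2 / 2 else ε * |t| - ε ^ 2 / 2


/-! Since `∑ uᵢ = 0`, `∑ uᵢ zᵢ = ∑ uᵢ (zᵢ - z̄)`, and Cauchy–Schwarz bounds this by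
`‖n u‖ · ‖z - z̄‖ / n ≤ √(ρ / a) · ‖z - z̄‖ / n`, which is the claimed value. Equality holds for
`u` proportional to `z - z̄`, and the hypothesis on `maxᵢ |zᵢ - z̄|` says exactly that this
maximiser also satisfies the box constraint `|n uᵢ| ≤ ε`. -/

open Finset

section SampleStatistics

variable {n : ℕ} (z : Fin n → ℝ)

theorem sampleVar_nonneg : 0 ≤ sampleVar z := by
  unfold sampleVar; positivity

theorem sum_sub_sampleMean : ∑ i, (z i - sampleMean z) = 0 := by
  rcases n.eq_zero_or_pos with rfl | hn
  · simp
  · simp [sum_sub_distrib, sampleMean, mul_div_cancel₀, hn.ne']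

theorem sum_sub_sampleMean_sq : ∑ i, (z i - sampleMean z) ^ 2 = n * sampleVar z := by
  rcases n.eq_zero_or_pos with rfl | hn
  · simp
  · simp [sampleVar, mul_div_cancel₀, hn.ne']

theorem sum_mul_sub_sampleMean {u : Fin n → ℝ} (hu : ∑ i, u i = 0) :
    ∑ i, u i * (z i - sampleMean z) = ∑ i, u i * z i := by
  simp [mul_sub, sum_sub_distrib, ← sum_mul, hu]

end SampleStatistics

section CauchySchwarzEquality

variable {ι : Type*} [Fintype ι] (d : ι → ℝ) (c : ℝ)

theorem sum_div_sqrt_mul_self (hd : ∑ i, d i ^ 2 ≠ 0) :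
    ∑ i, c / √(∑ j, d j ^ 2) * d i * d i = c * √(∑ i, d i ^ 2) := by
  have hσ : √(∑ i, d i ^ 2) ≠ 0 := by positivity
  have hσsq : √(∑ i, d i ^ 2) ^ 2 = ∑ i, d i ^ 2 := Real.sq_sqrt (by positivity)
  simp_rw [mul_assoc, ← sq, ← mul_sum]
  set σ := √(∑ i, d i ^ 2)
  rw [← hσsq]
  field_simp

theorem sum_div_sqrt_mul_sq (hd : ∑ i, d i ^ 2 ≠ 0) :
    ∑ i, (c / √(∑ j, d j ^ 2) * d i) ^ 2 = c ^ 2 := by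
  have hσ : √(∑ i, d i ^ 2) ≠ 0 := by positivity
  simp_rw [mul_pow, ← mul_sum, div_pow, Real.sq_sqrt (sum_nonneg fun i _ => sq_nonneg (d i))]
  field_simp

end CauchySchwarzEquality

theorem sqrt_mul_sampleVar_div_sqrt {n : ℕ} (hn : 0 < n) (z : Fin n → ℝ) {ρ a : ℝ}
    (hρ : 0 ≤ ρ) (ha : 0 < a) :
    √(ρ * sampleVar z / n) / √a = √(ρ / a) * √(∑ i, (z i - sampleMean z) ^ 2) / n := by
  have hs := sampleVar_nonneg z
  rw [sum_sub_sampleMean_sq, ← Real.sqrt_div' _ ha.le,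
    Real.sqrt_eq_iff_mul_self_eq (by positivity) (by positivity)]
  field_simp
  rw [Real.sq_sqrt (by positivity), Real.sq_sqrt (by positivity)]
  field_simp

def perturbationSet (n : ℕ) (ρ a ε : ℝ) : Set (Fin n → ℝ) :=
  {u | ∑ i, u i = 0 ∧ (∀ i, |(n : ℝ) * u i| ≤ ε) ∧ a * ∑ i, ((n : ℝ) * u i) ^ 2 ≤ ρ}

section Perturbation

variable {n : ℕ} (z : Fin n → ℝ) {ρ a : ℝ}

theorem sum_mul_le_of_sum_eq_zero (hn : 0 < n) (ha : 0 < a) {u : Fin n → ℝ}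
    (hu : ∑ i, u i = 0) (hq : a * ∑ i, ((n : ℝ) * u i) ^ 2 ≤ ρ) :
    ∑ i, u i * z i ≤ √(ρ / a) * √(∑ i, (z i - sampleMean z) ^ 2) / n := by
  rw [← sum_mul_sub_sampleMean z hu, le_div_iff₀ (by positivity), sum_mul]
  calc ∑ i, u i * (z i - sampleMean z) * n
      = ∑ i, n * u i * (z i - sampleMean z) := by simp_rw [mul_comm _ (n : ℝ), mul_assoc]
    _ ≤ √(∑ i, ((n : ℝ) * u i) ^ 2) * √(∑ i, (z i - sampleMean z) ^ 2) :=
      Real.sum_mul_le_sqrt_mul_sqrt _ _ _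
    _ ≤ √(ρ / a) * √(∑ i, (z i - sampleMean z) ^ 2) := by
      gcongr
      exact (le_div_iff₀' ha).2 hq

theorem exists_mem_perturbationSet {ε : ℝ} (hn : 0 < n) (ha : 0 < a) (hρ : 0 < ρ)
    (hd : ∑ i, (z i - sampleMean z) ^ 2 ≠ 0)
    (hmax : ∀ i, |z i - sampleMean z| / √n ≤ ε * √(sampleVar z) * √(a / ρ)) :
    ∃ u ∈ perturbationSet n ρ a ε,
      ∑ i, u i * z i = √(ρ / a) * √(∑ i, (z i - sampleMean z) ^ 2) / n := by
  set d := fun i => z i - sampleMean z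
  set r := √(ρ / a)
  set σ := √(∑ i, d i ^ 2)
  set u := fun i => r / n / σ * d i
  have hσ_eq : σ = √n * √(sampleVar z) := by
    rw [← Real.sqrt_mul n.cast_nonneg, ← sum_sub_sampleMean_sq]
  have hr : r * √(a / ρ) = 1 := by
    rw [← Real.sqrt_mul (by positivity), div_mul_div_comm, mul_comm ρ, div_self (by positivity),
      Real.sqrt_one]
  have hnu : ∀ i, (n : ℝ) * u i = r / σ * d i := fun i => by
    simp only [u]
    field_simp
  have hu : ∑ i, u i = 0 := by
    rw [← mul_sum, sum_sub_sampleMean, mul_zero]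
  refine ⟨u, ⟨hu, fun i => ?_, ?_⟩, ?_⟩
  · have hσ₀ : 0 < σ := Real.sqrt_pos.2 ((sum_nonneg fun i _ => sq_nonneg (d i)).lt_of_ne' hd)
    have hdi := (div_le_iff₀ (by positivity)).1 (hmax i)
    rw [hnu, abs_mul, abs_of_nonneg (by positivity)]
    calc r / σ * |d i| ≤ r / σ * (ε * √(sampleVar z) * √(a / ρ) * √n) := by gcongr
      _ = ε * (r * √(a / ρ)) * (√n * √(sampleVar z) / σ) := by ring
      _ = ε := by rw [hr, ← hσ_eq, div_self hσ₀.ne', mul_one, mul_one]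
  · rw [sum_congr rfl fun i _ => congrArg (· ^ 2) (hnu i), sum_div_sqrt_mul_sq d r hd,
      Real.sq_sqrt (by positivity)]
    exact (mul_div_cancel₀ ρ ha.ne').le
  · rw [← sum_mul_sub_sampleMean z hu, sum_div_sqrt_mul_self d _ hd]
    ring

end Perturbation

theorem stmt1 (n : ℕ) (hn : 0 < n) (z : Fin n → ℝ) (ρ a ε : ℝ)
    (hρ : 0 < ρ) (ha : 1 ≤ a) (hε : 0 < ε)
    (hmax : ∀ i, |z i - sampleMean z| / Real.sqrt n ≤
      ε * Real.sqrt (sampleVar z) * Real.sqrt (a / ρ)) :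
    sSup ((fun u : Fin n → ℝ => ∑ i, u i * z i) ''
        {u | ∑ i, u i = 0 ∧ (∀ i, |(n : ℝ) * u i| ≤ ε) ∧
          a * ∑ i, ((n : ℝ) * u i) ^ 2 ≤ ρ}) =
      Real.sqrt (ρ * sampleVar z / n) / Real.sqrt a := by
  have ha₀ : 0 < a := one_pos.trans_le ha
  rw [sqrt_mul_sampleVar_div_sqrt hn z hρ.le ha₀]
  refine IsGreatest.csSup_eq ⟨?_, ?_⟩
  · by_cases hd : ∑ i, (z i - sampleMean z) ^ 2 = 0
    · exact ⟨0, ⟨by simp, fun i => by simpa using hε.le, by simpa using hρ.le⟩, by simp [hd]⟩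
    · exact exists_mem_perturbationSet z hn ha₀ hρ hd hmax
  · rintro _ ⟨u, hu, rfl⟩
    exact sum_mul_le_of_sum_eq_zero z hn ha₀ hu.1 hu.2.2
end
end

section
/- Let n ∈ ℕ, z ∈ ℝⁿ, ρ > 0, b ∈ (0, 1], and ε > 0. Define V := { u ∈ ℝⁿ : Σ_{i=1}^n u_i = 0, Σ_{i=1}^n h_ε(n u_i) ≤ ρ / (2b) }. If max_{i ≤ n} |z_i − z̄| / √n ≤ ε · s_n(z) · √(b/ρ), then sup_{u ∈ V} uᵀz ≤ √(ρ s_n(z)² / n) / √b. -/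
/-!
Centre `z` at its mean: since `∑ uᵢ = 0`, `uᵀz = uᵀw` with `wᵢ = zᵢ - z̄`. The Huber function
is the Fenchel conjugate of `s ↦ s² / 2` restricted to `[-ε, ε]`, so `t s ≤ h_ε(t) + s² / 2`
whenever `|s| ≤ ε`. Applying this to `tᵢ = n uᵢ` and `sᵢ = c wᵢ` with the scale
`c = √(2R / ∑ wᵢ²)` that balances the two terms (the bound on `max |zᵢ - z̄|` is exactly
`c |wᵢ| ≤ ε`) gives `n uᵀw ≤ √(2R ∑ wᵢ²)` for `R = ρ / (2b)`.
-/

open MeasureTheory ProbabilityTheory Filter Set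

noncomputable section

open Finset

theorem mul_le_huber_add_sq_div_two {ε t s : ℝ} (hs : |s| ≤ ε) :
    t * s ≤ huber ε t + s ^ 2 / 2 := by
  obtain ⟨hs₁, hs₂⟩ := abs_le.1 hs
  rw [huber]
  split_ifs with ht
  · nlinarith [sq_nonneg (t - s)]
  · rcases le_or_gt 0 t with ht₀ | ht₀
    · rw [abs_of_nonneg ht₀] at ht ⊢
      nlinarith [sq_nonneg (s - ε)]
    · rw [abs_of_neg ht₀] at ht ⊢
      nlinarith [sq_nonneg (s + ε)]

theorem sum_mul_le_sqrt_of_sum_huber_le {ι : Type*} [Fintype ι] {t w : ι → ℝ} {ε R : ℝ}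
    (hR : 0 < R) (hw : ∀ i, |w i| * √(2 * R / ∑ i, w i ^ 2) ≤ ε)
    (ht : ∑ i, huber ε (t i) ≤ R) :
    ∑ i, t i * w i ≤ √(2 * R * ∑ i, w i ^ 2) := by
  set S := ∑ i, w i ^ 2 with hS
  rcases (sum_nonneg fun i _ => sq_nonneg (w i) : 0 ≤ S).eq_or_lt with hS₀ | hS₀
  · have hw₀ : ∀ i, w i = 0 := fun i => by
      have := (sum_eq_zero_iff_of_nonneg fun i _ => sq_nonneg (w i)).1 hS₀.symm i (mem_univ i)
      exact pow_eq_zero_iff two_ne_zero |>.1 this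
    simp [hw₀]
  set c := √(2 * R / S)
  have hc : 0 < c := Real.sqrt_pos.2 (by positivity)
  have hc_sq : c ^ 2 = 2 * R / S := Real.sq_sqrt (by positivity)
  have hfenchel : c * ∑ i, t i * w i ≤ 2 * R :=
    calc c * ∑ i, t i * w i = ∑ i, t i * (c * w i) := by
          rw [mul_sum]; exact sum_congr rfl fun i _ => by ring
      _ ≤ ∑ i, (huber ε (t i) + (c * w i) ^ 2 / 2) := by
          refine sum_le_sum fun i _ => mul_le_huber_add_sq_div_two ?_
          rw [abs_mul, abs_of_pos hc, mul_comm]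
          exact hw i
      _ = ∑ i, huber ε (t i) + c ^ 2 * S / 2 := by
          rw [sum_add_distrib, ← sum_div, hS, mul_sum]
          simp only [mul_pow]
      _ ≤ 2 * R := by rw [hc_sq, div_mul_cancel₀ _ hS₀.ne']; linarith
  have hsqrt : 2 * R / c = √(2 * R * S) := by
    rw [eq_comm, Real.sqrt_eq_iff_mul_self_eq (by positivity) (by positivity), div_mul_div_comm,
      ← sq c, hc_sq]
    field_simp
  rw [← hsqrt, le_div_iff₀ hc, mul_comm]
  exact hfenchel

theorem sum_sq_sub_sampleMean {n : ℕ} (z : Fin n → ℝ) :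
    ∑ i, (z i - sampleMean z) ^ 2 = n * sampleVar z := by
  rcases n.eq_zero_or_pos with rfl | hn
  · simp
  · rw [sampleVar, mul_div_cancel₀ _ (Nat.cast_pos.2 hn).ne']

theorem abs_sub_sampleMean_mul_sqrt_le {n : ℕ} (hn : 0 < n) {z : Fin n → ℝ} {ρ b ε : ℝ}
    (hρ : 0 < ρ) (hb : 0 < b) (hε : 0 ≤ ε) {i : Fin n}
    (hmax : |z i - sampleMean z| / √n ≤ ε * √(sampleVar z) * √(b / ρ)) :
    |z i - sampleMean z| * √(ρ / b / (n * sampleVar z)) ≤ ε := by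
  have hmax' : |z i - sampleMean z| ≤ ε * √(sampleVar z * (b / ρ) * n) := by
    rw [Real.sqrt_mul' _ n.cast_nonneg, Real.sqrt_mul' _ (by positivity), ← mul_assoc,
      ← mul_assoc]
    exact (div_le_iff₀ (by positivity)).1 hmax
  have hinv : √(ρ / b / (n * sampleVar z)) = (√(sampleVar z * (b / ρ) * n))⁻¹ := by
    rw [← Real.sqrt_inv, mul_inv, mul_inv, inv_div]
    ring_nf
  rw [hinv, ← div_eq_mul_inv]
  exact div_le_of_le_mul₀ (Real.sqrt_nonneg _) hε hmax'

theorem stmt2_general (n : ℕ) (hn : 0 < n) (z : Fin n → ℝ) (ρ b ε : ℝ)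
    (hρ : 0 < ρ) (hb0 : 0 < b) (hε : 0 < ε)
    (hmax : ∀ i, |z i - sampleMean z| / Real.sqrt n ≤
      ε * Real.sqrt (sampleVar z) * Real.sqrt (b / ρ)) :
    sSup ((fun u : Fin n → ℝ => ∑ i, u i * z i) ''
        {u | ∑ i, u i = 0 ∧ ∑ i, huber ε ((n : ℝ) * u i) ≤ ρ / (2 * b)}) ≤
      Real.sqrt (ρ * sampleVar z / n) / Real.sqrt b := by
  have hn' : (0 : ℝ) < n := Nat.cast_pos.2 hn
  have h2R : 2 * (ρ / (2 * b)) = ρ / b := by field_simp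
  refine Real.sSup_le ?_ (by positivity)
  rintro _ ⟨u, ⟨hu_sum, hu_huber⟩, rfl⟩
  have hcentre : ∑ i, u i * z i = ∑ i, u i * (z i - sampleMean z) := by
    simp only [mul_sub, sum_sub_distrib, ← sum_mul, hu_sum, zero_mul, sub_zero]
  have key : ∑ i, n * u i * (z i - sampleMean z) ≤ √(ρ / b * (n * sampleVar z)) := by
    rw [← h2R, ← sum_sq_sub_sampleMean]
    refine sum_mul_le_sqrt_of_sum_huber_le (by positivity) (fun i => ?_) hu_huber
    rw [h2R, sum_sq_sub_sampleMean]
    exact abs_sub_sampleMean_mul_sqrt_le hn hρ hb0 hε.le (hmax i)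
  have hrhs : √(ρ / b * (n * sampleVar z)) = n * (√(ρ * sampleVar z / n) / √b) :=
    calc √(ρ / b * (n * sampleVar z)) = √(n ^ 2 * (ρ * sampleVar z / n / b)) := by
          congr 1; field_simp
      _ = n * (√(ρ * sampleVar z / n) / √b) := by
          rw [Real.sqrt_mul (sq_nonneg _), Real.sqrt_sq hn'.le, Real.sqrt_div' _ hb0.le]
  simp only [mul_assoc, ← mul_sum, hrhs] at key
  exact hcentre.trans_le (le_of_mul_le_mul_left key hn')

theorem stmt2 (n : ℕ) (hn : 0 < n) (z : Fin n → ℝ) (ρ b ε : ℝ)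
    (hρ : 0 < ρ) (hb0 : 0 < b) (hb1 : b ≤ 1) (hε : 0 < ε)
    (hmax : ∀ i, |z i - sampleMean z| / Real.sqrt n ≤
      ε * Real.sqrt (sampleVar z) * Real.sqrt (b / ρ)) :
    sSup ((fun u : Fin n → ℝ => ∑ i, u i * z i) ''
        {u | ∑ i, u i = 0 ∧ ∑ i, huber ε ((n : ℝ) * u i) ≤ ρ / (2 * b)}) ≤
      Real.sqrt (ρ * sampleVar z / n) / Real.sqrt b :=
  stmt2_general n hn z ρ b ε hρ hb0 hε hmax
end
end

section
/- Let f satisfy Assumption A. Then there exist constants c > 0 and C < ∞, depending only on f, such that for all ε ∈ (0, c]: (i) f(1 + t) ≥ 2(1 − Cε) · h_ε(t) for all t ≥ −1; and (ii) f(1 + t) ≤ (1 + Cε) · t² for all t with |t| ≤ ε. -/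
/-!
Near `1`, `f` coincides with a `C³` function, so Taylor's theorem gives
`|f (1 + u) - u²| ≤ L |u|³` for small `u`. This gives the upper bound, and the lower bound for
`|t| ≤ 2ε`, where `t² / 8 ≤ h_ε(t) ≤ t² / 2`. For `|t| > 2ε` convexity takes over: `f (1 + t)`
lies above the extension of the chord of `f` between `1 ± ε` and `1 ± 2ε`, whose slope `≈ 3ε`
beats the slope `2ε` of `2 h_ε` there.
-/

open MeasureTheory ProbabilityTheory Filter Set

noncomputable section

lemma abs_le_mul_pow_of_abs_deriv_le {φ φ' : ℝ → ℝ} {a r K : ℝ} {n : ℕ} (hK : 0 ≤ K)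
    (hφa : φ a = 0) (hφ : ∀ y, |y - a| ≤ r → HasDerivAt φ (φ' y) y)
    (hbound : ∀ y, |y - a| ≤ r → |φ' y| ≤ K * |y - a| ^ n) {x : ℝ} (hx : |x - a| ≤ r) :
    |φ x| ≤ K * |x - a| ^ (n + 1) := by
  have hnear : ∀ y ∈ uIcc a x, |y - a| ≤ |x - a| := fun y hy => abs_sub_left_of_mem_uIcc hy
  have h := (convex_uIcc a x).norm_image_sub_le_of_norm_hasDerivWithin_le
    (fun y hy => (hφ y ((hnear y hy).trans hx)).hasDerivWithinAt)
    (fun y hy => (hbound y ((hnear y hy).trans hx)).trans <|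
      mul_le_mul_of_nonneg_left (pow_le_pow_left₀ (abs_nonneg _) (hnear y hy) n) hK)
    left_mem_uIcc right_mem_uIcc
  simpa only [hφa, sub_zero, Real.norm_eq_abs, pow_succ, mul_assoc] using h

lemma exists_abs_sub_taylor_two_le {g : ℝ → ℝ} {s : Set ℝ} {a r : ℝ} (hs : IsOpen s)
    (hg : ContDiffOn ℝ 3 g s) (hr : Icc (a - r) (a + r) ⊆ s) :
    ∃ K, 0 ≤ K ∧ ∀ x, |x - a| ≤ r →
      |g x - (g a + deriv g a * (x - a) + deriv (deriv g) a / 2 * (x - a) ^ 2)| ≤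
        K * |x - a| ^ 3 := by
  have hIcc : ∀ y, |y - a| ≤ r → y ∈ Icc (a - r) (a + r) := fun y hy =>
    mem_Icc_iff_abs_le.1 (by rwa [abs_sub_comm])
  have hg1 : ContDiffOn ℝ 2 (deriv g) s := hg.deriv_of_isOpen hs (by norm_num)
  have hg2 : ContDiffOn ℝ 1 (deriv (deriv g)) s := hg1.deriv_of_isOpen hs (by norm_num)
  have hderiv : ∀ {n : WithTop ℕ∞} {φ : ℝ → ℝ}, ContDiffOn ℝ n φ s → n ≠ 0 →
      ∀ y, |y - a| ≤ r → HasDerivAt φ (deriv φ y) y := fun hφ hn y hy =>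
    ((hφ.differentiableOn hn).differentiableAt (hs.mem_nhds (hr (hIcc y hy)))).hasDerivAt
  have hlin : ∀ c y, HasDerivAt (fun x => c * (x - a)) c y := fun c y => by
    simpa using ((hasDerivAt_id y).sub_const a).const_mul c
  obtain ⟨K₀, hK₀⟩ := (isCompact_Icc (a := a - r) (b := a + r)).exists_bound_of_continuousOn
    ((hg2.continuousOn_deriv_of_isOpen hs le_rfl).mono hr)
  set K := max K₀ 0
  have hK : 0 ≤ K := le_max_right _ _
  have h2 : ∀ x, |x - a| ≤ r → |deriv (deriv g) x - deriv (deriv g) a| ≤ K * |x - a| ^ 1 :=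
    fun x => abs_le_mul_pow_of_abs_deriv_le (φ := fun x => deriv (deriv g) x - deriv (deriv g) a)
      (φ' := deriv (deriv (deriv g))) hK (sub_self _)
      (fun y hy => (hderiv hg2 one_ne_zero y hy).sub_const _)
      (fun y hy => by
        rw [pow_zero, mul_one, ← Real.norm_eq_abs]
        exact (hK₀ y (hIcc y hy)).trans (le_max_left K₀ 0))
  have h1 : ∀ x, |x - a| ≤ r →
      |deriv g x - deriv g a - deriv (deriv g) a * (x - a)| ≤ K * |x - a| ^ 2 :=
    fun x => abs_le_mul_pow_of_abs_deriv_le hK (by simp)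
      (fun y hy => (((hderiv hg1 two_ne_zero y hy).sub_const _).sub (hlin _ y)))
      h2
  refine ⟨K, hK, fun x => abs_le_mul_pow_of_abs_deriv_le
    (φ := fun x => g x - (g a + deriv g a * (x - a) + deriv (deriv g) a / 2 * (x - a) ^ 2))
    hK (by simp) (fun y hy => ?_) h1⟩
  have hsq : HasDerivAt (fun x => deriv (deriv g) a / 2 * (x - a) ^ 2)
      (deriv (deriv g) a * (y - a)) y := by
    refine ((((hasDerivAt_id y).sub_const a).pow 2).const_mul _).congr_deriv ?_
    simp only [id]; ring
  exact ((hderiv hg (by norm_num) y hy).sub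
    (((hlin (deriv g a) y).const_add (g a)).add hsq)).congr_deriv (by ring)

def ERealConvex (f : ℝ → EReal) : Prop :=
  ∀ x y a b : ℝ, 0 ≤ a → 0 ≤ b → a + b = 1 →
    f (a * x + b * y) ≤ (a : EReal) * f x + (b : EReal) * f y

namespace ERealConvex

variable {f : ℝ → EReal}

lemma comp_const_add (hf : ERealConvex f) (c : ℝ) : ERealConvex fun x => f (c + x) :=
  fun x y a b ha hb hab => by
    convert hf (c + x) (c + y) a b ha hb hab using 2
    linear_combination -c * hab

lemma comp_neg (hf : ERealConvex f) : ERealConvex fun x => f (-x) :=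
  fun x y a b ha hb hab => by
    convert hf (-x) (-y) a b ha hb hab using 2
    ring

lemma extrapolate_le (hf : ERealConvex f) {x y m vy vm : ℝ} (hym : y < m) (hmx : m < x)
    (hy : f y = vy) (hm : f m = vm) :
    ((vm + (vm - vy) / (m - y) * (x - m) : ℝ) : EReal) ≤ f x := by
  set a := (m - y) / (x - y)
  set b := (x - m) / (x - y)
  have hxy : 0 < x - y := by linarith
  have ha : 0 < a := div_pos (by linarith) hxy
  have hconv := hf x y a b ha.le (div_nonneg (by linarith) hxy.le)
    (by simp only [a, b]; field_simp; ring)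
  rw [show a * x + b * y = m by simp only [a, b]; field_simp; ring, hm, hy] at hconv
  induction hfx : f x with
  | bot =>
    rw [hfx, EReal.coe_mul_bot_of_pos ha, EReal.bot_add] at hconv
    exact absurd hconv (by simp)
  | top => exact le_top
  | coe vx =>
    rw [hfx, ← EReal.coe_mul, ← EReal.coe_mul, ← EReal.coe_add, EReal.coe_le_coe_iff] at hconv
    rw [EReal.coe_le_coe_iff]
    have hmy : 0 < m - y := by linarith
    have hcross : vm * (x - y) ≤ (m - y) * vx + (x - m) * vy := by
      have := mul_le_mul_of_nonneg_left hconv hxy.le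
      simp only [a, b] at this
      field_simp at this
      linarith
    have hslope : vm + (vm - vy) / (m - y) * (x - m) =
        vx - ((m - y) * vx + (x - m) * vy - vm * (x - y)) / (m - y) := by
      field_simp; ring
    rw [hslope, sub_le_self_iff]
    exact div_nonneg (by linarith) hmy.le

end ERealConvex

lemma huber_neg (ε t : ℝ) : huber ε (-t) = huber ε t := by
  simp only [huber, abs_neg, neg_sq]

lemma two_mul_huber_le_sq (ε t : ℝ) : 2 * huber ε t ≤ t ^ 2 := by
  unfold huber
  split_ifs
  · linarith
  · nlinarith [sq_nonneg (|t| - ε), sq_abs t]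

lemma sq_le_eight_mul_huber {ε t : ℝ} (ht : |t| ≤ 2 * ε) : t ^ 2 ≤ 8 * huber ε t := by
  unfold huber
  split_ifs with h
  · nlinarith [sq_nonneg t]
  · nlinarith [mul_nonneg (sub_nonneg.2 ht) (sub_nonneg.2 (not_le.1 h).le), sq_abs t]

lemma huber_of_lt {ε t : ℝ} (hε : 0 ≤ ε) (ht : ε < t) :
    huber ε t = ε * t - ε ^ 2 / 2 := by
  rw [huber, if_neg (by rw [abs_of_pos (by linarith)]; exact not_le.2 ht),
    abs_of_pos (by linarith)]

lemma abs_pow_three_le_mul_sq {t δ : ℝ} (ht : |t| ≤ δ) : |t| ^ 3 ≤ δ * t ^ 2 :=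
  calc |t| ^ 3 = |t| * t ^ 2 := by rw [pow_succ', sq_abs]
    _ ≤ δ * t ^ 2 := mul_le_mul_of_nonneg_right ht (sq_nonneg t)

def IsSqUpToCubic (F : ℝ → EReal) (L r : ℝ) : Prop :=
  ∀ u, |u| ≤ r → ∃ v : ℝ, F u = v ∧ |v - u ^ 2| ≤ L * |u| ^ 3

namespace IsSqUpToCubic

variable {F : ℝ → EReal} {L r C ε t : ℝ}

lemma comp_neg (hF : IsSqUpToCubic F L r) : IsSqUpToCubic (fun u => F (-u)) L r :=
  fun u hu => by simpa using hF (-u) (by rwa [abs_neg])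

lemma le_one_add_mul_sq (hF : IsSqUpToCubic F L r) (hL : 0 ≤ L) (hC : L ≤ C) (hr : ε ≤ r)
    (ht : |t| ≤ ε) : F t ≤ (((1 + C * ε) * t ^ 2 : ℝ) : EReal) := by
  obtain ⟨v, hv, hvt⟩ := hF t (ht.trans hr)
  rw [hv, EReal.coe_le_coe_iff]
  have hcube : L * |t| ^ 3 ≤ C * ε * t ^ 2 :=
    calc L * |t| ^ 3 ≤ L * (ε * t ^ 2) :=
          mul_le_mul_of_nonneg_left (abs_pow_three_le_mul_sq ht) hL
      _ ≤ C * ε * t ^ 2 := by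
          rw [← mul_assoc]
          exact mul_le_mul_of_nonneg_right
            (mul_le_mul_of_nonneg_right hC ((abs_nonneg t).trans ht)) (sq_nonneg t)
  linarith [(abs_le.1 hvt).2]

lemma huber_le_of_abs_le (hF : IsSqUpToCubic F L r) (hL : 0 ≤ L) (hC : 8 * L ≤ C)
    (hε : 0 ≤ ε) (hr : 2 * ε ≤ r) (ht : |t| ≤ 2 * ε) :
    ((2 * (1 - C * ε) * huber ε t : ℝ) : EReal) ≤ F t := by
  obtain ⟨v, hv, hvt⟩ := hF t (ht.trans hr)
  rw [hv, EReal.coe_le_coe_iff]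
  have hcube : L * |t| ^ 3 ≤ L * (2 * ε * t ^ 2) :=
    mul_le_mul_of_nonneg_left (abs_pow_three_le_mul_sq ht) hL
  have hCε : 0 ≤ C * ε := mul_nonneg (by linarith) hε
  have hslack : 0 ≤ (C - 8 * L) * ε * t ^ 2 := by
    have := sub_nonneg.2 hC
    positivity
  nlinarith [(abs_le.1 hvt).1, two_mul_huber_le_sq ε t,
    mul_le_mul_of_nonneg_left (sq_le_eight_mul_huber ht) hCε]

lemma huber_le_of_lt (hF : IsSqUpToCubic F L r) (hconv : ERealConvex F) (hL : 0 ≤ L)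
    (hC : 8 * L ≤ C) (hε : 0 < ε) (hr : 2 * ε ≤ r) (ht : 2 * ε < t) :
    ((2 * (1 - C * ε) * huber ε t : ℝ) : EReal) ≤ F t := by
  obtain ⟨v₁, hv₁, hv₁ε⟩ := hF ε (by rw [abs_of_pos hε]; linarith)
  obtain ⟨v₂, hv₂, hv₂ε⟩ := hF (2 * ε) (by rw [abs_of_pos (by linarith)]; exact hr)
  refine le_trans (EReal.coe_le_coe_iff.2 ?_)
    (hconv.extrapolate_le (by linarith : ε < 2 * ε) ht hv₁ hv₂)
  rw [abs_of_pos hε] at hv₁ε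
  rw [abs_of_pos (show (0 : ℝ) < 2 * ε by linarith)] at hv₂ε
  rw [huber_of_lt hε.le (by linarith), show 2 * ε - ε = ε by ring]
  have hslope : 3 * ε - 9 * L * ε ^ 2 ≤ (v₂ - v₁) / ε := by
    rw [le_div_iff₀ hε]
    linarith [(abs_le.1 hv₁ε).2, (abs_le.1 hv₂ε).1]
  have hgap : 0 ≤ t - 2 * ε := by linarith
  have hε2 : 0 < ε ^ 2 := by positivity
  nlinarith [mul_le_mul_of_nonneg_right hslope hgap, (abs_le.1 hv₂ε).1,
    mul_nonneg hε.le (by linarith : 0 ≤ t - ε), mul_nonneg (mul_nonneg hL hε2.le) hgap,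
    mul_nonneg (mul_nonneg hL hε2.le) hε.le,
    mul_nonneg (mul_nonneg (sub_nonneg.2 hC) hε2.le) (by linarith : 0 ≤ 2 * t - ε)]

lemma huber_le (hF : IsSqUpToCubic F L r) (hconv : ERealConvex F) (hL : 0 ≤ L) (hC : 8 * L ≤ C)
    (hε : 0 < ε) (hr : 2 * ε ≤ r) (ht : 0 ≤ t) :
    ((2 * (1 - C * ε) * huber ε t : ℝ) : EReal) ≤ F t := by
  rcases le_or_gt t (2 * ε) with hnear | hfar
  · exact hF.huber_le_of_abs_le hL hC hε.le hr (by rwa [abs_of_nonneg ht])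
  · exact hF.huber_le_of_lt hconv hL hC hε hr hfar

end IsSqUpToCubic

lemma IsDivergenceFn.exists_isSqUpToCubic {f : ℝ → EReal} (hf : IsDivergenceFn f) :
    ∃ L r, 0 ≤ L ∧ 0 < r ∧ IsSqUpToCubic (fun u => f (1 + u)) L r := by
  obtain ⟨g, δ, hδ, hfg, hg, hg0, hg1, hg2⟩ := hf.smooth
  obtain ⟨K, hK, htaylor⟩ := exists_abs_sub_taylor_two_le (a := 1) (r := δ / 2) isOpen_Ioo hg
    (Icc_subset_Ioo (by linarith) (by linarith))
  refine ⟨K, δ / 2, hK, by positivity, fun u hu => ⟨g (1 + u), hfg _ ?_, ?_⟩⟩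
  · constructor <;> linarith [abs_le.1 hu]
  · simpa [hg0, hg1, hg2] using htaylor (1 + u) (by simpa using hu)

theorem stmt4 (f : ℝ → EReal) (hf : IsDivergenceFn f) :
    ∃ c C : ℝ, 0 < c ∧ 0 ≤ C ∧
      ∀ ε : ℝ, 0 < ε → ε ≤ c →
        (∀ t : ℝ, -1 ≤ t →
          ((2 * (1 - C * ε) * huber ε t : ℝ) : EReal) ≤ f (1 + t)) ∧
        (∀ t : ℝ, |t| ≤ ε →
          f (1 + t) ≤ (((1 + C * ε) * t ^ 2 : ℝ) : EReal)) := by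
  obtain ⟨L, r, hL, hr, hF⟩ := hf.exists_isSqUpToCubic
  have hconv : ERealConvex fun u => f (1 + u) := ERealConvex.comp_const_add hf.convex 1
  refine ⟨r / 2, 8 * L, by positivity, by positivity,
    fun ε hε hεc => ⟨fun t _ => ?_, fun t ht => ?_⟩⟩
  · rcases le_total 0 t with ht | ht
    · exact hF.huber_le hconv hL le_rfl hε (by linarith) ht
    · simpa [huber_neg] using
        hF.comp_neg.huber_le hconv.comp_neg hL le_rfl hε (by linarith) (neg_nonneg.2 ht)
  · exact hF.le_one_add_mul_sq hL (by linarith) (by linarith) ht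
end
end

section
/- Fix k ∈ (1, ∞) and let k* := k/(k−1). Define the Cressie–Read function f_k(t) := (t^k − k t + k − 1) / (2k(k−1)) for t ≥ 0 and f_k(t) := +∞ for t < 0. Then for every n ∈ ℕ, every ρ > 0, and every ℓ ∈ ℝⁿ, sup { Σ_{i=1}^n p_i ℓ_i : p ∈ ℝⁿ, p ≥ 0, Σ_i p_i = 1, Σ_{i=1}^n f_k(n p_i) ≤ ρ } = inf_{η ∈ ℝ} { (1 + 2k(k−1)ρ/n)^{1/k} · ( (1/n) Σ_{i=1}^n (max(ℓ_i − η, 0))^{k*} )^{1/k*} + η }. -/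
open MeasureTheory ProbabilityTheory Filter Set

noncomputable section

/-! Weak duality is Hölder's inequality: `∑ pᵢ ℓᵢ ≤ ∑ pᵢ (ℓᵢ - η)₊ + η`, and for `∑ pᵢ = 1` the
divergence constraint says exactly that the density `n p` of `p` with respect to the uniform
distribution has `k`-th moment at most `A = 1 + 2k(k-1)ρ/n`.

For strong duality, the weights `p ∝ (ℓ - η)₊ ^ (k* - 1)` make Hölder's inequality tight, and the
`k`-th moment of their density is continuous in `η < max ℓ`, is close to `1 < A` for `η` far below
`min ℓ`, and for `η` just below `max ℓ` they are uniform on the maximisers of `ℓ`. Either those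
uniform weights are feasible and attain `max ℓ`, the dual value at `η = max ℓ`, or the intermediate
value theorem gives an `η` at which the constraint is active and Hölder's inequality is tight. -/

open Finset Real Topology

theorem csSup_image_eq_ciInf_of_forall_le {α β γ : Type*} [ConditionallyCompleteLattice γ]
    {s : Set α} {f : α → γ} {g : β → γ} (hle : ∀ x ∈ s, ∀ y, f x ≤ g y)
    (hex : ∃ x ∈ s, ∃ y, g y ≤ f x) : sSup (f '' s) = ⨅ y, g y := by
  obtain ⟨x, hx, y, hy⟩ := hex
  have : Nonempty β := ⟨y⟩
  refine le_antisymm (csSup_le ⟨f x, x, hx, rfl⟩ ?_) ?_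
  · rintro _ ⟨x', hx', rfl⟩
    exact le_ciInf (hle x' hx')
  · calc ⨅ y, g y ≤ g y := ciInf_le ⟨f x, by rintro _ ⟨y', rfl⟩; exact hle x hx y'⟩ y
      _ ≤ f x := hy
      _ ≤ sSup (f '' s) :=
        le_csSup ⟨g y, by rintro _ ⟨x', hx', rfl⟩; exact hle x' hx' y⟩ ⟨x, hx, rfl⟩

theorem Real.mul_inner_le_Lp_mul_Lq_of_nonneg {ι : Type*} (s : Finset ι) {p q c : ℝ}
    (hpq : p.HolderConjugate q) (hc : 0 ≤ c) {f g : ι → ℝ} (hf : ∀ i ∈ s, 0 ≤ f i)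
    (hg : ∀ i ∈ s, 0 ≤ g i) :
    c * ∑ i ∈ s, f i * g i ≤
      (c * ∑ i ∈ s, f i ^ p) ^ (1 / p) * (c * ∑ i ∈ s, g i ^ q) ^ (1 / q) := by
  have hpq' : 1 / p + 1 / q = 1 := by simpa only [one_div] using hpq.inv_add_inv_eq_one
  rw [mul_rpow hc (sum_nonneg fun i hi => rpow_nonneg (hf i hi) _),
    mul_rpow hc (sum_nonneg fun i hi => rpow_nonneg (hg i hi) _), mul_mul_mul_comm,
    ← rpow_add' hc (by rw [hpq']; exact one_ne_zero), hpq', rpow_one]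
  exact mul_le_mul_of_nonneg_left (inner_le_Lp_mul_Lq_of_nonneg s hpq hf hg) hc

theorem Real.HolderConjugate.mul_rpow_one_div_mul_rpow_one_div {p q x y : ℝ}
    (hpq : p.HolderConjugate q) (hx : 0 ≤ x) (hy : 0 ≤ y) :
    (x * y ^ p) ^ (1 / p) * x ^ (1 / q) = x * y := by
  have hpq' : 1 / p + 1 / q = 1 := by simpa only [one_div] using hpq.inv_add_inv_eq_one
  rw [mul_rpow hx (rpow_nonneg hy _), ← rpow_mul hy, mul_one_div_cancel hpq.ne_zero, rpow_one,
    mul_right_comm, ← rpow_add' hx (by rw [hpq']; exact one_ne_zero), hpq', rpow_one]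

theorem max_zero_rpow_sub_one_mul {q : ℝ} (hq : 1 < q) (t : ℝ) :
    max t 0 ^ (q - 1) * t = max t 0 ^ q := by
  rcases le_or_gt t 0 with ht | ht
  · rw [max_eq_right ht, zero_rpow (by linarith), zero_rpow (by linarith), zero_mul]
  · rw [max_eq_left ht.le, ← rpow_add_one ht.ne', sub_add_cancel]

theorem exists_lt_forall_lt_of_lt {ι : Type*} [Finite ι] (f : ι → ℝ) (m : ℝ) :
    ∃ η < m, ∀ i, f i < m → f i < η := by
  have : ∀ᶠ η in 𝓝[<] m, η < m ∧ ∀ i, f i < m → f i < η := by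
    refine (eventually_mem_nhdsWithin (s := Iio m)).and (eventually_all.2 fun i => ?_)
    by_cases hi : f i < m
    · filter_upwards [Ioo_mem_nhdsLT hi] with η hη using fun _ => hη.1
    · exact Eventually.of_forall fun _ hi' => absurd hi' hi
  exact this.exists

section

variable {n : ℕ}

/-- The `k`-th moment of the density `n • p` of `p` with respect to the uniform distribution. -/
def densityMoment (k : ℝ) (p : Fin n → ℝ) : ℝ := (1 / n) * ∑ i, ((n : ℝ) * p i) ^ k

def dualObjective (k q A : ℝ) (ℓ : Fin n → ℝ) (η : ℝ) : ℝ :=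
  A ^ (1 / k) * ((1 / n) * ∑ i, max (ℓ i - η) 0 ^ q) ^ (1 / q) + η

def tiltedWeights (q : ℝ) (ℓ : Fin n → ℝ) (η : ℝ) (i : Fin n) : ℝ :=
  max (ℓ i - η) 0 ^ (q - 1) / ∑ j, max (ℓ j - η) 0 ^ (q - 1)

variable {k q A η : ℝ} {ℓ : Fin n → ℝ}

theorem sum_cressieRead_le_iff {ρ : ℝ} (hk : 1 < k) (hn : 0 < n) {p : Fin n → ℝ}
    (hp : ∑ i, p i = 1) :
    ∑ i, (((n : ℝ) * p i) ^ k - k * ((n : ℝ) * p i) + k - 1) / (2 * k * (k - 1)) ≤ ρ ↔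
      densityMoment k p ≤ 1 + 2 * k * (k - 1) * ρ / n := by
  have hn' : (0 : ℝ) < n := Nat.cast_pos.2 hn
  have hC : 0 < 2 * k * (k - 1) := by nlinarith
  have hsum : ∑ i, (((n : ℝ) * p i) ^ k - k * ((n : ℝ) * p i) + k - 1) =
      ∑ i, ((n : ℝ) * p i) ^ k - n := by
    simp only [sum_sub_distrib, sum_add_distrib, ← mul_sum, hp, sum_const, card_univ,
      Fintype.card_fin, nsmul_eq_mul]
    ring
  rw [← sum_div, hsum, div_le_iff₀ hC, densityMoment, one_div_mul_eq_div, div_le_iff₀ hn',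
    add_mul, div_mul_cancel₀ _ hn'.ne']
  constructor <;> intro h <;> linarith

theorem sum_mul_le_dualObjective (hkq : k.HolderConjugate q) {p : Fin n → ℝ}
    (hp0 : ∀ i, 0 ≤ p i) (hp1 : ∑ i, p i = 1) (hpA : densityMoment k p ≤ A) (η : ℝ) :
    ∑ i, p i * ℓ i ≤ dualObjective k q A ℓ η := by
  have hn : (n : ℝ) ≠ 0 := by
    rintro hn
    obtain rfl : n = 0 := by exact_mod_cast hn
    simp at hp1
  calc ∑ i, p i * ℓ i = ∑ i, p i * (ℓ i - η) + η := by
        simp only [mul_sub, sum_sub_distrib, ← sum_mul, hp1, one_mul, sub_add_cancel]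
    _ ≤ ∑ i, p i * max (ℓ i - η) 0 + η := by
        gcongr with i
        exacts [hp0 i, le_max_left _ _]
    _ = (1 / n) * ∑ i, ((n : ℝ) * p i) * max (ℓ i - η) 0 + η := by
        rw [mul_sum]
        congr 1
        exact sum_congr rfl fun i _ => by field_simp
    _ ≤ densityMoment k p ^ (1 / k) * ((1 / n) * ∑ i, max (ℓ i - η) 0 ^ q) ^ (1 / q) + η :=
        (add_le_add_iff_right η).2 <|
          mul_inner_le_Lp_mul_Lq_of_nonneg _ hkq (one_div_nonneg.2 n.cast_nonneg)
            (fun i _ => mul_nonneg n.cast_nonneg (hp0 i)) fun _ _ => le_max_right _ _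
    _ ≤ dualObjective k q A ℓ η := by
        unfold dualObjective
        have : 0 ≤ densityMoment k p := by
          unfold densityMoment
          exact mul_nonneg (by positivity)
            (sum_nonneg fun i _ => rpow_nonneg (mul_nonneg n.cast_nonneg (hp0 i)) _)
        have := hkq.pos
        gcongr

theorem dualObjective_of_forall_le (hq : q ≠ 0) (hη : ∀ i, ℓ i ≤ η) :
    dualObjective k q A ℓ η = η := by
  simp [dualObjective, max_eq_right (sub_nonpos.2 (hη _)), zero_rpow hq,
    zero_rpow (inv_ne_zero hq)]

theorem sum_max_sub_rpow_pos (r : ℝ) {j : Fin n} (hj : η < ℓ j) :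
    0 < ∑ i, max (ℓ i - η) 0 ^ r :=
  sum_pos' (fun _ _ => rpow_nonneg (le_max_right _ _) _)
    ⟨j, mem_univ _, rpow_pos_of_pos (lt_max_of_lt_left (sub_pos.2 hj)) _⟩

theorem tiltedWeights_nonneg (i : Fin n) : 0 ≤ tiltedWeights q ℓ η i :=
  div_nonneg (rpow_nonneg (le_max_right _ _) _)
    (sum_nonneg fun _ _ => rpow_nonneg (le_max_right _ _) _)

theorem tiltedWeights_eq_zero (hq : 1 < q) {i : Fin n} (hi : ℓ i ≤ η) :
    tiltedWeights q ℓ η i = 0 := by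
  rw [tiltedWeights, max_eq_right (sub_nonpos.2 hi), zero_rpow (by linarith), zero_div]

theorem sum_tiltedWeights {j : Fin n} (hj : η < ℓ j) : ∑ i, tiltedWeights q ℓ η i = 1 := by
  simp only [tiltedWeights]
  rw [← sum_div, div_self (sum_max_sub_rpow_pos _ hj).ne']

theorem sum_tiltedWeights_mul (hq : 1 < q) {j : Fin n} (hj : η < ℓ j) :
    ∑ i, tiltedWeights q ℓ η i * ℓ i =
      (∑ i, max (ℓ i - η) 0 ^ q) / ∑ i, max (ℓ i - η) 0 ^ (q - 1) + η := by
  calc ∑ i, tiltedWeights q ℓ η i * ℓ i = ∑ i, tiltedWeights q ℓ η i * (ℓ i - η) + η := by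
        simp only [mul_sub, sum_sub_distrib, ← sum_mul, sum_tiltedWeights hj, one_mul,
          sub_add_cancel]
    _ = _ := by
        simp only [tiltedWeights, div_mul_eq_mul_div, max_zero_rpow_sub_one_mul hq, ← sum_div]

theorem densityMoment_tiltedWeights (hkq : k.HolderConjugate q) :
    densityMoment k (tiltedWeights q ℓ η) =
      (1 / n) * (∑ i, max (ℓ i - η) 0 ^ q) * (n / ∑ i, max (ℓ i - η) 0 ^ (q - 1)) ^ k := by
  have hT : 0 ≤ ∑ i, max (ℓ i - η) 0 ^ (q - 1) :=
    sum_nonneg fun _ _ => rpow_nonneg (le_max_right _ _) _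
  simp only [densityMoment, tiltedWeights, mul_assoc, sum_mul]
  congr 1
  refine sum_congr rfl fun i _ => ?_
  rw [mul_div_assoc', mul_comm, mul_div_assoc, mul_rpow (rpow_nonneg (le_max_right _ _) _)
    (div_nonneg n.cast_nonneg hT), ← rpow_mul (le_max_right _ _), hkq.symm.sub_one_mul_conj]

theorem dualObjective_tiltedWeights_eq (hkq : k.HolderConjugate q) {j : Fin n} (hj : η < ℓ j)
    (hA : densityMoment k (tiltedWeights q ℓ η) = A) :
    dualObjective k q A ℓ η = ∑ i, tiltedWeights q ℓ η i * ℓ i := by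
  have hn : (n : ℝ) ≠ 0 := Nat.cast_ne_zero.2 (Fin.pos j).ne'
  have hT := sum_max_sub_rpow_pos (q - 1) hj
  rw [sum_tiltedWeights_mul hkq.symm.lt hj, dualObjective, ← hA, densityMoment_tiltedWeights hkq,
    hkq.mul_rpow_one_div_mul_rpow_one_div (by positivity) (by positivity)]
  field_simp

theorem continuousOn_densityMoment_tiltedWeights (hq : 1 ≤ q) (hk : 0 ≤ k) (j : Fin n) :
    ContinuousOn (fun η => densityMoment k (tiltedWeights q ℓ η)) (Iio (ℓ j)) := by
  have hpow : ∀ i, Continuous fun η => max (ℓ i - η) 0 ^ (q - 1) := fun i =>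
    ((continuous_const.sub continuous_id).max continuous_const).rpow_const
      fun _ => Or.inr (sub_nonneg.2 hq)
  refine continuousOn_const.mul (continuousOn_finsetSum _ fun i _ => ?_)
  refine (continuousOn_const.mul ((hpow i).continuousOn.div
    (continuous_finsetSum _ fun i _ => hpow i).continuousOn fun η hη => ?_)).rpow_const
    fun _ _ => Or.inr hk
  exact (sum_max_sub_rpow_pos _ hη).ne'

theorem densityMoment_tiltedWeights_le (hkq : k.HolderConjugate q) (hn : 0 < n) {a b : ℝ}
    (ha : 0 < a) (hab : ∀ i, a ≤ ℓ i - η ∧ ℓ i - η ≤ b) :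
    densityMoment k (tiltedWeights q ℓ η) ≤ (b / a) ^ q := by
  have hn' : (0 : ℝ) < n := Nat.cast_pos.2 hn
  have hq : 0 ≤ q - 1 := hkq.symm.sub_one_pos.le
  have hx : ∀ i, max (ℓ i - η) 0 = ℓ i - η := fun i => max_eq_left (ha.le.trans (hab i).1)
  have hT : n * a ^ (q - 1) ≤ ∑ i, max (ℓ i - η) 0 ^ (q - 1) := by
    calc n * a ^ (q - 1) = ∑ _i : Fin n, a ^ (q - 1) := by simp
      _ ≤ _ := sum_le_sum fun i _ => by rw [hx]; exact rpow_le_rpow ha.le (hab i).1 hq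
  have hterm : ∀ i, ((n : ℝ) * tiltedWeights q ℓ η i) ^ k ≤ (b / a) ^ q := by
    intro i
    have hb : 0 ≤ b := ha.le.trans ((hab i).1.trans (hab i).2)
    have hratio : (n : ℝ) * tiltedWeights q ℓ η i ≤ (b / a) ^ (q - 1) := calc
      (n : ℝ) * tiltedWeights q ℓ η i =
          n * max (ℓ i - η) 0 ^ (q - 1) / ∑ j, max (ℓ j - η) 0 ^ (q - 1) := by
        rw [tiltedWeights, mul_div_assoc']
      _ ≤ n * b ^ (q - 1) / (n * a ^ (q - 1)) := by
        refine div_le_div₀ (by positivity) (mul_le_mul_of_nonneg_left ?_ hn'.le)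
          (by positivity) hT
        rw [hx]
        exact rpow_le_rpow (ha.le.trans (hab i).1) (hab i).2 hq
      _ = (b / a) ^ (q - 1) := by rw [mul_div_mul_left _ _ hn'.ne', div_rpow hb ha.le]
    calc ((n : ℝ) * tiltedWeights q ℓ η i) ^ k ≤ ((b / a) ^ (q - 1)) ^ k :=
          rpow_le_rpow (mul_nonneg n.cast_nonneg (tiltedWeights_nonneg i)) hratio hkq.pos.le
      _ = (b / a) ^ q := by rw [← rpow_mul (div_nonneg hb ha.le), hkq.symm.sub_one_mul_conj]
  calc densityMoment k (tiltedWeights q ℓ η) ≤ (1 / n) * ∑ _i : Fin n, (b / a) ^ q :=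
        mul_le_mul_of_nonneg_left (sum_le_sum fun i _ => hterm i) (by positivity)
    _ = (b / a) ^ q := by simp [hn'.ne']

theorem exists_densityMoment_tiltedWeights_lt (hkq : k.HolderConjugate q) (hn : 0 < n)
    (ℓ : Fin n → ℝ) (hA : 1 < A) (η₁ : ℝ) :
    ∃ η₀ ≤ η₁, densityMoment k (tiltedWeights q ℓ η₀) < A := by
  obtain ⟨lo, hlo⟩ := (Set.finite_range ℓ).bddBelow
  obtain ⟨hi, hhi⟩ := (Set.finite_range ℓ).bddAbove
  set c := min lo η₁
  have hc : ∀ i, c ≤ ℓ i := fun i => (min_le_left _ _).trans (hlo ⟨i, rfl⟩)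
  have hci : c ≤ hi := (hc ⟨0, hn⟩).trans (hhi ⟨_, rfl⟩)
  set B := A ^ (1 / q)
  have hB : 1 < B := one_lt_rpow hA (one_div_pos.2 hkq.symm.pos)
  set d := (hi - c) / (B - 1) + 1
  have hd : 0 < d :=
    add_pos_of_nonneg_of_pos (div_nonneg (sub_nonneg.2 hci) (sub_nonneg.2 hB.le)) one_pos
  have hdB : (hi - c + d) / d < B := by
    rw [div_lt_iff₀ hd]
    have : (B - 1) * ((hi - c) / (B - 1)) = hi - c := mul_div_cancel₀ _ (by linarith)
    nlinarith
  refine ⟨c - d, by linarith [min_le_right lo η₁], ?_⟩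
  calc densityMoment k (tiltedWeights q ℓ (c - d)) ≤ ((hi - c + d) / d) ^ q :=
        densityMoment_tiltedWeights_le hkq hn hd fun i =>
          ⟨by linarith [hc i], by linarith [hhi ⟨i, rfl⟩]⟩
    _ < B ^ q := rpow_lt_rpow (by positivity) hdB hkq.symm.pos
    _ = A := by rw [← rpow_mul (by linarith), one_div_mul_cancel hkq.symm.ne_zero, rpow_one]

theorem exists_dualObjective_le (hkq : k.HolderConjugate q) (hn : 0 < n) (ℓ : Fin n → ℝ)
    (hA : 1 < A) :
    ∃ p ∈ {p : Fin n → ℝ | (∀ i, 0 ≤ p i) ∧ ∑ i, p i = 1 ∧ densityMoment k p ≤ A},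
      ∃ η, dualObjective k q A ℓ η ≤ ∑ i, p i * ℓ i := by
  have : Nonempty (Fin n) := ⟨⟨0, hn⟩⟩
  obtain ⟨j, hj⟩ := Finite.exists_max ℓ
  obtain ⟨η₁, hη₁j, hη₁⟩ := exists_lt_forall_lt_of_lt ℓ (ℓ j)
  -- At `η₁` the tilted weights are uniform on the maximisers of `ℓ`.
  by_cases h₁ : densityMoment k (tiltedWeights q ℓ η₁) ≤ A
  · refine ⟨_, ⟨tiltedWeights_nonneg, sum_tiltedWeights hη₁j, h₁⟩, ℓ j, ?_⟩
    have hsupp : ∀ i, tiltedWeights q ℓ η₁ i * ℓ i = tiltedWeights q ℓ η₁ i * ℓ j := by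
      intro i
      rcases (hj i).lt_or_eq with hi | hi
      · rw [tiltedWeights_eq_zero hkq.symm.lt (hη₁ i hi).le, zero_mul, zero_mul]
      · rw [hi]
    rw [dualObjective_of_forall_le hkq.symm.ne_zero hj, sum_congr rfl fun i _ => hsupp i,
      ← sum_mul, sum_tiltedWeights hη₁j, one_mul]
  · obtain ⟨η₀, hη₀, h₀⟩ := exists_densityMoment_tiltedWeights_lt hkq hn ℓ hA η₁
    obtain ⟨η, hη, hηA⟩ := intermediate_value_Icc hη₀
      ((continuousOn_densityMoment_tiltedWeights hkq.symm.lt.le hkq.pos.le j).mono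
        fun x hx => hx.2.trans_lt hη₁j) ⟨h₀.le, (not_le.1 h₁).le⟩
    have hηj : η < ℓ j := hη.2.trans_lt hη₁j
    exact ⟨_, ⟨tiltedWeights_nonneg, sum_tiltedWeights hηj, hηA.le⟩, η,
      (dualObjective_tiltedWeights_eq hkq hηj hηA).le⟩

end

theorem stmt17 (k kstar : ℝ) (hk : 1 < k) (hkstar : kstar = k / (k - 1))
    (n : ℕ) (hn : 0 < n) (ρ : ℝ) (hρ : 0 < ρ) (ℓ : Fin n → ℝ) :
    sSup ((fun p : Fin n → ℝ => ∑ i, p i * ℓ i) ''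
        {p | (∀ i, 0 ≤ p i) ∧ ∑ i, p i = 1 ∧
          ∑ i, (((n : ℝ) * p i) ^ k - k * ((n : ℝ) * p i) + k - 1) / (2 * k * (k - 1)) ≤ ρ}) =
      ⨅ η : ℝ, (1 + 2 * k * (k - 1) * ρ / n) ^ (1 / k) *
          ((1 / n) * ∑ i, (max (ℓ i - η) 0) ^ kstar) ^ (1 / kstar) + η := by
  have hkq : k.HolderConjugate kstar := (holderConjugate_iff_eq_conjExponent hk).2 hkstar
  have hA : 1 < 1 + 2 * k * (k - 1) * ρ / n := by
    have := hkq.sub_one_pos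
    have := hkq.pos
    simp only [lt_add_iff_pos_right]
    positivity
  have hset : {p : Fin n → ℝ | (∀ i, 0 ≤ p i) ∧ ∑ i, p i = 1 ∧
      ∑ i, (((n : ℝ) * p i) ^ k - k * ((n : ℝ) * p i) + k - 1) / (2 * k * (k - 1)) ≤ ρ} =
      {p | (∀ i, 0 ≤ p i) ∧ ∑ i, p i = 1 ∧ densityMoment k p ≤ 1 + 2 * k * (k - 1) * ρ / n} := by
    ext p
    exact and_congr_right fun _ => and_congr_right fun hp => sum_cressieRead_le_iff hk hn hp
  rw [hset]
  exact csSup_image_eq_ciInf_of_forall_le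
    (fun p hp η => sum_mul_le_dualObjective hkq hp.1 hp.2.1 hp.2.2 η)
    (exists_dualObjective_le hkq hn ℓ hA)
end
end
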